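/- Let (n_i)_{i≥1} be a sequence of integers with n_i ≥ 2 for all i, and let W = (W_1, W_2, W_3, …) be its J-word. If the averages (n_1 + ⋯ + n_k)/k tend to infinity as k → ∞, then for every integer d ≥ 2 the density of d among the terms of W is zero; that is, lim_{N→∞} #{ j ≤ N : W_j = d } / N = 0. -/

import Mathlib

/-!
The letters of a J-word other than `1` are the `2`s ending the blocks, and the `k`-th block
ends at position `n₁ + ⋯ + n_k - (k - 1)`. Since the averages of the `n_i` tend to infinity,
these positions grow faster than any linear function `M k`, so at most `K + N / M + 1` of
them lie in `[1, N]`; hence their density is zero.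
-/

/-- Given a sequence `n` (indexed from 1) of integers with `n i ≥ 2` for all `i ≥ 1`,
`W` (indexed from 1) is its J-word: the concatenation of blocks `B_1 B_2 B_3 ⋯`, where
`B_1` consists of `n 1 - 1` copies of `1` followed by a single `2` and, for `i ≥ 2`,
`B_i` consists of `n i - 2` copies of `1` followed by a single `2`.  Equivalently,
`W j = 2` exactly when `j` is the position of the end of some block, i.e. when
`j = (n 1 + ⋯ + n k) - (k - 1)` for some `k ≥ 1`, and `W j = 1` otherwise. -/
def IsJWord (n : ℕ → ℤ) (W : ℕ → ℕ) : Prop :=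
  ∀ j : ℕ, 1 ≤ j →
    ((∃ k : ℕ, 1 ≤ k ∧ (j : ℤ) = (∑ i ∈ Finset.Icc 1 k, n i) - ((k : ℤ) - 1)) → W j = 2) ∧
    ((¬ ∃ k : ℕ, 1 ≤ k ∧ (j : ℤ) = (∑ i ∈ Finset.Icc 1 k, n i) - ((k : ℤ) - 1)) → W j = 1)

open Filter Finset Topology

def blockEnd (n : ℕ → ℤ) (k : ℕ) : ℤ :=
  (∑ i ∈ Icc 1 k, n i) - ((k : ℤ) - 1)

theorem tendsto_blockEnd_div_atTop {n : ℕ → ℤ}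
    (havg : Tendsto (fun k : ℕ => (∑ i ∈ Icc 1 k, (n i : ℝ)) / k) atTop atTop) :
    Tendsto (fun k : ℕ => (blockEnd n k : ℝ) / k) atTop atTop := by
  refine tendsto_atTop_mono' _ ?_ (tendsto_atTop_add_const_right _ (-1) havg)
  filter_upwards [eventually_gt_atTop 0] with k hk
  have hk : (0 : ℝ) < k := by exact_mod_cast hk
  have hcast : (blockEnd n k : ℝ) = (∑ i ∈ Icc 1 k, (n i : ℝ)) - ((k : ℝ) - 1) := by
    simp [blockEnd]
  rw [hcast, sub_div, ← sub_eq_add_neg, sub_le_sub_iff_left, div_le_one hk]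
  linarith

open scoped Classical in
theorem card_filter_mem_range_le {p : ℕ → ℤ} {K : ℕ} {M : ℝ} (hM : 0 < M)
    (hp : ∀ k ≥ K, M * k ≤ p k) (N : ℕ) :
    (#{j ∈ Icc 1 N | ∃ k, ((j : ℕ) : ℤ) = p k} : ℝ) ≤ K + N / M + 1 := by
  have hsub : {j ∈ Icc 1 N | ∃ k, ((j : ℕ) : ℤ) = p k} ⊆
      (range (K + ⌊(N : ℝ) / M⌋₊ + 1)).image (fun k => (p k).toNat) := by
    intro j hj
    obtain ⟨hjN, k, hjk⟩ := by simpa only [mem_filter, mem_Icc] using hj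
    refine mem_image.2 ⟨k, mem_range.2 ?_, by omega⟩
    rcases lt_or_ge k K with hkK | hkK
    · omega
    · have hpkN : (p k : ℝ) ≤ N := by
        rw [← hjk]
        exact_mod_cast hjN.2
      have hkN : (k : ℝ) ≤ N / M := by
        rw [le_div_iff₀ hM, mul_comm]
        exact (hp k hkK).trans hpkN
      have := Nat.le_floor hkN
      omega
  calc (#{j ∈ Icc 1 N | ∃ k, ((j : ℕ) : ℤ) = p k} : ℝ)
      ≤ (K + ⌊(N : ℝ) / M⌋₊ + 1 : ℕ) := by
        exact_mod_cast (card_le_card hsub).trans (card_image_le.trans (card_range _).le)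
    _ ≤ K + N / M + 1 := by
        push_cast
        gcongr
        exact Nat.floor_le (by positivity)

open scoped Classical in
theorem tendsto_card_filter_mem_range_div_atTop {p : ℕ → ℤ}
    (hp : Tendsto (fun k : ℕ => (p k : ℝ) / k) atTop atTop) :
    Tendsto (fun N : ℕ => (#{j ∈ Icc 1 N | ∃ k, ((j : ℕ) : ℤ) = p k} : ℝ) / N) atTop (𝓝 0) := by
  refine tendsto_order.2 ⟨fun a ha => Eventually.of_forall fun N => ha.trans_le (by positivity),
    fun ε hε => ?_⟩
  obtain ⟨K, hK⟩ := eventually_atTop.1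
    ((hp.eventually_ge_atTop (2 / ε)).and (eventually_gt_atTop 0))
  have hM : ∀ k ≥ K, 2 / ε * k ≤ p k := fun k hk =>
    (le_div_iff₀ (by exact_mod_cast (hK k hk).2)).1 (hK k hk).1
  filter_upwards [(tendsto_const_div_atTop_nhds_zero_nat ((K : ℝ) + 1)).eventually
    (gt_mem_nhds (half_pos hε)), eventually_gt_atTop 0] with N hN hN0
  have hN0 : (0 : ℝ) < N := by exact_mod_cast hN0
  calc (#{j ∈ Icc 1 N | ∃ k, ((j : ℕ) : ℤ) = p k} : ℝ) / N
      ≤ (K + N / (2 / ε) + 1) / N := by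
        gcongr
        exact card_filter_mem_range_le (by positivity) hM N
    _ = (K + 1) / N + ε / 2 := by field_simp; ring
    _ < ε := by linarith

theorem jword_density_of_d_eq_zero_general (n : ℕ → ℤ)
    (W : ℕ → ℕ) (hW : IsJWord n W)
    (havg : Filter.Tendsto (fun k : ℕ => (∑ i ∈ Finset.Icc 1 k, (n i : ℝ)) / k)
      Filter.atTop Filter.atTop)
    (d : ℕ) (hd : 2 ≤ d) :
    Filter.Tendsto
      (fun N : ℕ => (((Finset.Icc 1 N).filter (fun j => W j = d)).card : ℝ) / N)
      Filter.atTop (nhds 0) := by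
  have hend : ∀ j, 1 ≤ j → W j = d → ∃ k, (j : ℤ) = blockEnd n k := by
    intro j hj hWj
    by_contra hnot
    have := (hW j hj).2 fun ⟨k, _, hk⟩ => hnot ⟨k, hk⟩
    omega
  classical
  refine squeeze_zero (fun N => by positivity) (fun N => ?_)
    (tendsto_card_filter_mem_range_div_atTop (tendsto_blockEnd_div_atTop havg))
  gcongr with j hj
  exact hend j (mem_Icc.1 hj).1

/-- If the partial quotient averages `(n_1 + ⋯ + n_k)/k` tend to infinity, then for
every integer `d ≥ 2` the density of `d` among the terms of the J-word is zero. -/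
theorem jword_density_of_d_eq_zero (n : ℕ → ℤ) (hn : ∀ i : ℕ, 1 ≤ i → 2 ≤ n i)
    (W : ℕ → ℕ) (hW : IsJWord n W)
    (havg : Filter.Tendsto (fun k : ℕ => (∑ i ∈ Finset.Icc 1 k, (n i : ℝ)) / k)
      Filter.atTop Filter.atTop)
    (d : ℕ) (hd : 2 ≤ d) :
    Filter.Tendsto
      (fun N : ℕ => (((Finset.Icc 1 N).filter (fun j => W j = d)).card : ℝ) / N)
      Filter.atTop (nhds 0) :=
  jword_density_of_d_eq_zero_general n W hW havg d hd
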